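/- arXiv:1409.6778 — 3 statements merged into one kernel-verified Lean document; each statement's English description precedes it below -/
import Mathlib

section
/- Let E be a real normed vector space, let k ≥ 1 be a natural number, and let f : E → ℝ be C^k on E ∖ {0} (ContDiffOn ℝ k f {0}ᶜ) and positively homogeneous of degree k − 1: f(t • x) = t^(k−1) • f(x) for all real t > 0 and all x ≠ 0 (natural number power). Then for every x ≠ 0 and every family of vectors v : Fin k → E with v 0 = x, the k-th iterated Fréchet derivative of f within {0}ᶜ at x vanishes on v: iteratedFDerivWithin ℝ k f {0}ᶜ x v = 0. -/
/-!
Scaling by `t > 0` preserves `{0}ᶜ`, so differentiating `f (t • y) = t ^ (k - 1) • f y`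
`k - 1` times shows that `D^(k-1) f` is homogeneous of degree `0`. By Euler's identity its
derivative in the radial direction `x` vanishes at `x`, and this radial derivative is the
`k`-th derivative of `f` evaluated with outermost direction `x`.
-/

open Filter Topology

section Scaling

variable {𝕜 E F : Type*} [NontriviallyNormedField 𝕜]
  [NormedAddCommGroup E] [NormedSpace 𝕜 E] [NormedAddCommGroup F] [NormedSpace 𝕜 F]
  {f : E → F} {s : Set E} {x : E} {c : 𝕜}

theorem iteratedFDerivWithin_comp_const_smul (hs : UniqueDiffOn 𝕜 s) (hc : c ≠ 0)
    (hcs : (c • ·) ⁻¹' s = s) (hx : c • x ∈ s) (i : ℕ) :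
    iteratedFDerivWithin 𝕜 i (fun y ↦ f (c • y)) s x =
      c ^ i • iteratedFDerivWithin 𝕜 i f s (c • x) := by
  let g : E ≃L[𝕜] E := ContinuousLinearEquiv.smulLeft (Units.mk0 c hc)
  have hg : ⇑g = (c • ·) := rfl
  have hcomp := g.iteratedFDerivWithin_comp_right f hs (x := x) (by rwa [hg]) i
  rw [hg, hcs] at hcomp
  simp only [Function.comp_def] at hcomp
  ext w
  rw [hcomp, ContinuousMultilinearMap.compContinuousLinearMap_apply]
  simp [hg, ContinuousMultilinearMap.map_smul_univ]

theorem iteratedFDerivWithin_smul_of_homogeneous (hs : UniqueDiffOn 𝕜 s) (hc : c ≠ 0)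
    (hcs : (c • ·) ⁻¹' s = s) {m i : ℕ} (hhom : ∀ y ∈ s, f (c • y) = c ^ m • f y)
    (hf : ContDiffWithinAt 𝕜 i f s x) (hx : x ∈ s) :
    c ^ i • iteratedFDerivWithin 𝕜 i f s (c • x) =
      c ^ m • iteratedFDerivWithin 𝕜 i f s x := by
  have hcx : c • x ∈ s := by rwa [← Set.mem_preimage, hcs]
  rw [← iteratedFDerivWithin_comp_const_smul hs hc hcs hcx, iteratedFDerivWithin_congr hhom hx]
  exact iteratedFDerivWithin_const_smul_apply hf hs hx

theorem fderiv_apply_self_of_homogeneous {g : E → F} {m : ℕ} (hg : DifferentiableAt 𝕜 g x)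
    (hhom : ∀ᶠ t in 𝓝 (1 : 𝕜), g (t • x) = t ^ m • g x) :
    fderiv 𝕜 g x x = (m : 𝕜) • g x := by
  have hline : HasDerivAt (fun t : 𝕜 ↦ g (t • x)) (fderiv 𝕜 g x x) 1 := by
    simpa [Function.comp_def] using hg.hasFDerivAt.comp_hasDerivAt_of_eq 1
      ((hasDerivAt_id (1 : 𝕜)).smul_const x) (one_smul 𝕜 x).symm
  have hpow : HasDerivAt (fun t : 𝕜 ↦ g (t • x)) ((m : 𝕜) • g x) 1 := by
    simpa using ((hasDerivAt_pow m (1 : 𝕜)).smul_const (g x)).congr_of_eventuallyEq hhom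
  exact hline.unique hpow

end Scaling

/-- Flat-model form of `X^{A₁} D_{A₁} ⋯ D_{A_k} σ = 0`: if `f : E → ℝ` is `C^k` away from
the origin and positively homogeneous of degree `k − 1` (so each `(k−1)`-fold derivative
is homogeneous of degree `0`), then the `k`-th iterated Fréchet derivative of `f` within
`{0}ᶜ` at `x ≠ 0` vanishes whenever the outermost direction is the radial direction `x`. -/
theorem iteratedFDeriv_homogeneous_radial_vanish
    {E : Type*} [NormedAddCommGroup E] [NormedSpace ℝ E]
    (k : ℕ) (hk : 1 ≤ k) (f : E → ℝ)
    (hf : ContDiffOn ℝ k f ({(0 : E)}ᶜ))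
    (hhom : ∀ t : ℝ, 0 < t → ∀ x : E, x ≠ 0 → f (t • x) = (t ^ (k - 1)) • f x) :
    ∀ x : E, x ≠ 0 → ∀ v : Fin k → E, v ⟨0, hk⟩ = x →
      iteratedFDerivWithin ℝ k f ({(0 : E)}ᶜ) x v = 0 := by
  intro x hx v hv
  obtain ⟨n, rfl⟩ := Nat.exists_eq_add_of_le' hk
  have hs : IsOpen ({(0 : E)}ᶜ) := isOpen_compl_singleton
  have hscale : ∀ t : ℝ, 0 < t →
      iteratedFDerivWithin ℝ n f {0}ᶜ (t • x) = iteratedFDerivWithin ℝ n f {0}ᶜ x := by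
    intro t ht
    refine smul_right_injective _ (pow_ne_zero n ht.ne') ?_
    exact iteratedFDerivWithin_smul_of_homogeneous hs.uniqueDiffOn ht.ne'
      (by ext; simp [ht.ne']) (by simpa using hhom t ht) (hf.of_le (by simp) x hx) hx
  have hdiff : DifferentiableAt ℝ (iteratedFDerivWithin ℝ n f {0}ᶜ) x :=
    (hf.differentiableOn_iteratedFDerivWithin (Nat.cast_lt.2 n.lt_succ_self) hs.uniqueDiffOn
      x hx).differentiableAt (hs.mem_nhds hx)
  have hrad : fderiv ℝ (iteratedFDerivWithin ℝ n f {0}ᶜ) x x = 0 := by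
    simpa using fderiv_apply_self_of_homogeneous (m := 0) hdiff
      (by filter_upwards [eventually_gt_nhds one_pos] with t ht using by simpa using hscale t ht)
  rw [iteratedFDerivWithin_succ_apply_left, fderivWithin_of_isOpen hs hx, show v 0 = x from hv,
    hrad, zero_apply]
end

section
/- Fix n ≥ 1 and work on ℝⁿ. Let Υₐ : ℝⁿ → ℝ (a ∈ Fin n) be smooth, and let σ^{bc} : ℝⁿ → ℝ (b, c ∈ Fin n) be smooth with σ^{bc} = σ^{cb}. Define ∇̂ₐσ^{bc} := ∂ₐσ^{bc} + δₐ^b·Σ_d Υ_d·σ^{dc} + δₐ^c·Σ_d Υ_d·σ^{db}, and for any T with Tₐ^{bc} = Tₐ^{cb} define its trace-free part TF(T)ₐ^{bc} := Tₐ^{bc} − (1/(n+1))·(δₐ^b·Σ_d T_d^{dc} + δₐ^c·Σ_d T_d^{db}). Then TF(∇̂σ)ₐ^{bc} = TF(∂σ)ₐ^{bc} for all a, b, c; i.e., the trace-free part of the covariant derivative of σ^{bc} is unchanged under the projective change of connection. -/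
/-- Partial derivative of `f : ℝⁿ → ℝ` in the `a`-th coordinate direction. -/
noncomputable def pd {n : ℕ} (a : Fin n) (f : (Fin n → ℝ) → ℝ) (x : Fin n → ℝ) : ℝ :=
  fderiv ℝ f x (Pi.single a 1)

/-- The projectively changed covariant derivative
`∇̂ₐσ^{bc} = ∂ₐσ^{bc} + δₐ^bΥ_dσ^{dc} + δₐ^cΥ_dσ^{db}` of a symmetric contravariant
2-tensor of projective weight −2. -/
noncomputable def covD {n : ℕ} (Υ : Fin n → (Fin n → ℝ) → ℝ)
    (σ : Fin n → Fin n → (Fin n → ℝ) → ℝ) (a b c : Fin n) (x : Fin n → ℝ) : ℝ :=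
  pd a (σ b c) x + (if a = b then (1 : ℝ) else 0) * ∑ d, Υ d x * σ d c x
    + (if a = c then (1 : ℝ) else 0) * ∑ d, Υ d x * σ d b x

/-- The trace-free part `TF(T)ₐ^{bc} = Tₐ^{bc} − (1/(n+1))(δₐ^b T_d^{dc} + δₐ^c T_d^{db})`. -/
noncomputable def traceFree {n : ℕ} (T : Fin n → Fin n → Fin n → (Fin n → ℝ) → ℝ)
    (a b c : Fin n) (x : Fin n → ℝ) : ℝ :=
  T a b c x - (1 / ((n : ℝ) + 1)) *
    ((if a = b then (1 : ℝ) else 0) * ∑ d, T d d c x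
      + (if a = c then (1 : ℝ) else 0) * ∑ d, T d d b x)

/-- Projective invariance of the metrisability (first BGG) operator in the flat model:
the trace-free part of the covariant derivative of a symmetric weight −2 tensor
`σ^{bc}` is unchanged under a projective change of the flat connection. -/
theorem traceFree_covD_projectively_invariant (n : ℕ) (hn : 1 ≤ n)
    (Υ : Fin n → (Fin n → ℝ) → ℝ) (σ : Fin n → Fin n → (Fin n → ℝ) → ℝ)
    (hΥ : ∀ a, ContDiff ℝ (⊤ : ℕ∞) (Υ a)) (hσ : ∀ b c, ContDiff ℝ (⊤ : ℕ∞) (σ b c))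
    (hsym : ∀ b c, σ b c = σ c b) :
    ∀ (a b c : Fin n) (x : Fin n → ℝ),
      traceFree (covD Υ σ) a b c x
        = traceFree (fun a b c x => pd a (σ b c) x) a b c x := by
  intro a b c x
  have hne : ((n : ℝ) + 1) ≠ 0 := by positivity
  have key : ∀ e : Fin n, ∑ d, covD Υ σ d d e x
      = (∑ d, pd d (σ d e) x) + ((n : ℝ) + 1) * ∑ d, Υ d x * σ d e x := by
    intro e
    have h1 : ∀ d : Fin n, covD Υ σ d d e x
        = pd d (σ d e) x + (∑ f, Υ f x * σ f e x)
          + (if d = e then (1 : ℝ) else 0) * ∑ f, Υ f x * σ f d x := by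
      intro d
      simp [covD]
    rw [Finset.sum_congr rfl (fun d _ => h1 d)]
    rw [Finset.sum_add_distrib, Finset.sum_add_distrib, Finset.sum_const,
      Finset.card_univ, Fintype.card_fin]
    have h2 : (∑ d : Fin n, (if d = e then (1 : ℝ) else 0) * ∑ f, Υ f x * σ f d x)
        = ∑ f, Υ f x * σ f e x := by
      simp [ite_mul]
    rw [h2]
    push_cast
    ring
  simp only [traceFree]
  rw [key c, key b]
  simp only [covD]
  by_cases hab : a = b <;> by_cases hac : a = c
  · have hbc : b = c := hab ▸ hac
    subst hbc; subst hab
    simp only [if_pos rfl, one_mul]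
    field_simp
    ring
  · have hbc : b ≠ c := fun h => hac (hab.trans h)
    simp only [hab, hac, if_pos rfl, if_neg hbc, if_neg (Ne.symm hbc),
      if_neg (fun h : a = c => hac h), one_mul]
    field_simp
    ring
  · have hbc : c ≠ b := fun h => hab (hac.trans h)
    simp only [hab, hac, if_pos rfl, if_neg hbc, if_neg (Ne.symm hbc),
      if_neg (fun h : a = b => hab h), one_mul]
    field_simp
    ring
  · simp [hab, hac]
end

section
/- Fix n ≥ 1 and work on ℝⁿ. Let Υₐ, σ : ℝⁿ → ℝ (a ∈ Fin n) be smooth. Define: ∇̂_cσ := ∂_cσ + 2Υ_c·σ (density of weight 2); for one-forms μ of weight 2, ∇̂_bμ_c := ∂_bμ_c + Υ_b·μ_c − Υ_c·μ_b; for (0,2)-tensors ν of weight 2, ∇̂ₐν_{bc} := ∂ₐν_{bc} − Υ_b·ν_{ac} − Υ_c·ν_{ba}; for (0,2)-tensors of weight 0, ∇̂ₐQ̂_{bc} := ∂ₐQ̂_{bc} − 2Υₐ·Q̂_{bc} − Υ_b·Q̂_{ac} − Υ_c·Q̂_{ba}, where Q̂ₐb := −∂ₐΥ_b + Υₐ·Υ_b.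 Then the total symmetrization over (a,b,c) of ∇̂ₐ(∇̂_b(∇̂_cσ)) + 4·Q̂_{ab}·(∇̂_cσ) + 2·(∇̂ₐQ̂_{bc})·σ equals ∂₍ₐ∂_b∂_c₎σ, the symmetrized third partial derivative of σ. In other words, the third-order operator σ ↦ ∇₍ₐ∇_b∇_c₎σ + 4Q₍ₐb∇_c₎σ + 2(∇₍ₐQ_bc₎)σ on weight-2 densities is projectively invariant (flat model). -/
/-- The transformed projective Schouten tensor `Q̂ₐ_b = −∂ₐΥ_b + ΥₐΥ_b` of the
projectively changed flat connection. -/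
noncomputable def Qhat {n : ℕ} (Υ : Fin n → (Fin n → ℝ) → ℝ) (a b : Fin n) :
    (Fin n → ℝ) → ℝ :=
  fun y => -(pd a (Υ b) y) + Υ a y * Υ b y

/-- `∇̂_cσ = ∂_cσ + 2Υ_cσ`: the changed covariant derivative of a weight-2 density. -/
noncomputable def D1 {n : ℕ} (Υ : Fin n → (Fin n → ℝ) → ℝ) (σ : (Fin n → ℝ) → ℝ)
    (c : Fin n) : (Fin n → ℝ) → ℝ :=
  fun y => pd c σ y + 2 * Υ c y * σ y

/-- `∇̂_b(∇̂_cσ)`: the changed covariant derivative (for weight-2 one-forms,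
`∇̂_bμ_c = ∂_bμ_c + Υ_bμ_c − Υ_cμ_b`) applied to `∇̂σ`. -/
noncomputable def D2 {n : ℕ} (Υ : Fin n → (Fin n → ℝ) → ℝ) (σ : (Fin n → ℝ) → ℝ)
    (b c : Fin n) : (Fin n → ℝ) → ℝ :=
  fun y => pd b (D1 Υ σ c) y + Υ b y * D1 Υ σ c y - Υ c y * D1 Υ σ b y

/-- `∇̂ₐ(∇̂_b(∇̂_cσ))`: the changed covariant derivative (for weight-2 (0,2)-tensors,
`∇̂ₐν_{bc} = ∂ₐν_{bc} − Υ_bν_{ac} − Υ_cν_{ba}`) applied to `∇̂∇̂σ`. -/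
noncomputable def D3 {n : ℕ} (Υ : Fin n → (Fin n → ℝ) → ℝ) (σ : (Fin n → ℝ) → ℝ)
    (a b c : Fin n) (x : Fin n → ℝ) : ℝ :=
  pd a (D2 Υ σ b c) x - Υ b x * D2 Υ σ a c x - Υ c x * D2 Υ σ b a x

/-- `∇̂ₐQ̂_{bc} = ∂ₐQ̂_{bc} − 2ΥₐQ̂_{bc} − Υ_bQ̂_{ac} − Υ_cQ̂_{ba}`: the changed covariant
derivative of the weight-0 (0,2)-tensor `Q̂`. -/
noncomputable def DQhat {n : ℕ} (Υ : Fin n → (Fin n → ℝ) → ℝ)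
    (a b c : Fin n) (x : Fin n → ℝ) : ℝ :=
  pd a (Qhat Υ b c) x - 2 * Υ a x * Qhat Υ b c x - Υ b x * Qhat Υ a c x
    - Υ c x * Qhat Υ b a x

/-- The (unsymmetrized) transformed spin-three BGG expression
`∇̂ₐ∇̂_b∇̂_cσ + 4Q̂ₐ_b∇̂_cσ + 2(∇̂ₐQ̂_{bc})σ`. -/
noncomputable def spin3Expr {n : ℕ} (Υ : Fin n → (Fin n → ℝ) → ℝ) (σ : (Fin n → ℝ) → ℝ)
    (a b c : Fin n) (x : Fin n → ℝ) : ℝ :=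
  D3 Υ σ a b c x + 4 * Qhat Υ a b x * D1 Υ σ c x + 2 * DQhat Υ a b c x * σ x


namespace Spin3Aux

lemma pd_add {n : ℕ} (a : Fin n) {f g : (Fin n → ℝ) → ℝ} {x : Fin n → ℝ}
    (hf : DifferentiableAt ℝ f x) (hg : DifferentiableAt ℝ g x) :
    pd a (fun y => f y + g y) x = pd a f x + pd a g x := by
  simp [pd, fderiv_fun_add hf hg]

lemma pd_sub {n : ℕ} (a : Fin n) {f g : (Fin n → ℝ) → ℝ} {x : Fin n → ℝ}
    (hf : DifferentiableAt ℝ f x) (hg : DifferentiableAt ℝ g x) :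
    pd a (fun y => f y - g y) x = pd a f x - pd a g x := by
  simp [pd, fderiv_fun_sub hf hg]

lemma pd_mul {n : ℕ} (a : Fin n) {f g : (Fin n → ℝ) → ℝ} {x : Fin n → ℝ}
    (hf : DifferentiableAt ℝ f x) (hg : DifferentiableAt ℝ g x) :
    pd a (fun y => f y * g y) x = pd a f x * g x + f x * pd a g x := by
  simp [pd, fderiv_fun_mul hf hg]; ring

lemma pd_neg {n : ℕ} (a : Fin n) {f : (Fin n → ℝ) → ℝ} {x : Fin n → ℝ} :
    pd a (fun y => -(f y)) x = -(pd a f x) := by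
  simp [pd, fderiv_neg]

lemma pd_const_mul {n : ℕ} (a : Fin n) {f : (Fin n → ℝ) → ℝ} {x : Fin n → ℝ}
    (hf : DifferentiableAt ℝ f x) (r : ℝ) :
    pd a (fun y => r * f y) x = r * pd a f x := by
  simp [pd, fderiv_const_mul hf r]

lemma contDiff_pd {n : ℕ} (a : Fin n) {f : (Fin n → ℝ) → ℝ} (hf : ContDiff ℝ (⊤ : ℕ∞) f) :
    ContDiff ℝ (⊤ : ℕ∞) (pd a f) := by
  unfold pd
  exact (hf.fderiv_right (by simp)).clm_apply contDiff_const

variable {n : ℕ} {Υ : Fin n → (Fin n → ℝ) → ℝ} {σ : (Fin n → ℝ) → ℝ}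

lemma contDiff_D1 (hΥ : ∀ a, ContDiff ℝ (⊤ : ℕ∞) (Υ a)) (hσ : ContDiff ℝ (⊤ : ℕ∞) σ) (c : Fin n) :
    ContDiff ℝ (⊤ : ℕ∞) (D1 Υ σ c) := by
  unfold D1
  exact (contDiff_pd c hσ).add ((contDiff_const.mul (hΥ c)).mul hσ)

lemma pd_D1 (hΥ : ∀ a, ContDiff ℝ (⊤ : ℕ∞) (Υ a)) (hσ : ContDiff ℝ (⊤ : ℕ∞) σ) (b c : Fin n)
    (x : Fin n → ℝ) :
    pd b (D1 Υ σ c) x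
      = pd b (pd c σ) x + (2 * pd b (Υ c) x * σ x + 2 * Υ c x * pd b σ x) := by
  have hσd : DifferentiableAt ℝ σ x := hσ.differentiable (by simp) x
  have hdc : DifferentiableAt ℝ (pd c σ) x :=
    (contDiff_pd c hσ).differentiable (by simp) x
  have hΥc : DifferentiableAt ℝ (Υ c) x := (hΥ c).differentiable (by simp) x
  have h2Υc : DifferentiableAt ℝ (fun y => 2 * Υ c y) x :=
    (differentiableAt_const 2).mul hΥc
  unfold D1
  rw [pd_add b (f := fun y => pd c σ y) (g := fun y => 2 * Υ c y * σ y) hdc (h2Υc.mul hσd),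
    pd_mul b (f := fun y => 2 * Υ c y) (g := σ) h2Υc hσd,
    pd_const_mul b hΥc 2]

lemma D2_eq (hΥ : ∀ a, ContDiff ℝ (⊤ : ℕ∞) (Υ a)) (hσ : ContDiff ℝ (⊤ : ℕ∞) σ) (b c : Fin n) :
    D2 Υ σ b c
      = fun y => pd b (pd c σ) y + 2 * pd b (Υ c) y * σ y
          + Υ b y * pd c σ y + Υ c y * pd b σ y := by
  funext y
  show pd b (D1 Υ σ c) y + Υ b y * D1 Υ σ c y - Υ c y * D1 Υ σ b y = _
  rw [pd_D1 hΥ hσ b c y]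
  show _ + Υ b y * (pd c σ y + 2 * Υ c y * σ y) - Υ c y * (pd b σ y + 2 * Υ b y * σ y) = _
  ring

lemma pd_Qhat (hΥ : ∀ a, ContDiff ℝ (⊤ : ℕ∞) (Υ a)) (a b c : Fin n) (x : Fin n → ℝ) :
    pd a (Qhat Υ b c) x
      = -(pd a (pd b (Υ c)) x) + (pd a (Υ b) x * Υ c x + Υ b x * pd a (Υ c) x) := by
  have hb : DifferentiableAt ℝ (Υ b) x := (hΥ b).differentiable (by simp) x
  have hc : DifferentiableAt ℝ (Υ c) x := (hΥ c).differentiable (by simp) x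
  have hdbc : DifferentiableAt ℝ (fun y => -(pd b (Υ c) y)) x :=
    ((contDiff_pd b (hΥ c)).differentiable (by simp) x).neg
  unfold Qhat
  rw [pd_add a (f := fun y => -(pd b (Υ c) y)) (g := fun y => Υ b y * Υ c y)
      hdbc (hb.mul hc),
    pd_neg a (f := pd b (Υ c)), pd_mul a (f := Υ b) (g := Υ c) hb hc]

lemma pd_D2 (hΥ : ∀ a, ContDiff ℝ (⊤ : ℕ∞) (Υ a)) (hσ : ContDiff ℝ (⊤ : ℕ∞) σ) (a b c : Fin n)
    (x : Fin n → ℝ) :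
    pd a (D2 Υ σ b c) x
      = pd a (pd b (pd c σ)) x
        + (2 * pd a (pd b (Υ c)) x * σ x + 2 * pd b (Υ c) x * pd a σ x)
        + (pd a (Υ b) x * pd c σ x + Υ b x * pd a (pd c σ) x)
        + (pd a (Υ c) x * pd b σ x + Υ c x * pd a (pd b σ) x) := by
  have hσd : DifferentiableAt ℝ σ x := hσ.differentiable (by simp) x
  have hdaσ : DifferentiableAt ℝ (pd b σ) x := (contDiff_pd b hσ).differentiable (by simp) x
  have hdcσ : DifferentiableAt ℝ (pd c σ) x := (contDiff_pd c hσ).differentiable (by simp) x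
  have h1 : DifferentiableAt ℝ (pd b (pd c σ)) x :=
    (contDiff_pd b (contDiff_pd c hσ)).differentiable (by simp) x
  have hΥb : DifferentiableAt ℝ (Υ b) x := (hΥ b).differentiable (by simp) x
  have hΥc : DifferentiableAt ℝ (Υ c) x := (hΥ c).differentiable (by simp) x
  have hdbΥc : DifferentiableAt ℝ (pd b (Υ c)) x :=
    (contDiff_pd b (hΥ c)).differentiable (by simp) x
  have h2f : DifferentiableAt ℝ (fun y => 2 * pd b (Υ c) y) x :=
    (differentiableAt_const 2).mul hdbΥc
  have h2 : DifferentiableAt ℝ (fun y => 2 * pd b (Υ c) y * σ y) x := h2f.mul hσd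
  have h3 : DifferentiableAt ℝ (fun y => Υ b y * pd c σ y) x := hΥb.mul hdcσ
  have h4 : DifferentiableAt ℝ (fun y => Υ c y * pd b σ y) x := hΥc.mul hdaσ
  rw [D2_eq hΥ hσ b c,
    pd_add a (f := fun y => pd b (pd c σ) y + 2 * pd b (Υ c) y * σ y + Υ b y * pd c σ y)
      (g := fun y => Υ c y * pd b σ y) ((h1.add h2).add h3) h4,
    pd_add a (f := fun y => pd b (pd c σ) y + 2 * pd b (Υ c) y * σ y)
      (g := fun y => Υ b y * pd c σ y) (h1.add h2) h3,
    pd_add a (f := fun y => pd b (pd c σ) y)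
      (g := fun y => 2 * pd b (Υ c) y * σ y) h1 h2,
    pd_mul a (f := fun y => 2 * pd b (Υ c) y) (g := σ) h2f hσd,
    pd_const_mul a hdbΥc 2,
    pd_mul a (f := Υ b) (g := pd c σ) hΥb hdcσ,
    pd_mul a (f := Υ c) (g := pd b σ) hΥc hdaσ]

end Spin3Aux

/-- Projective invariance of the spin-three first BGG operator in the flat model: the
total symmetrization over `(a,b,c)` of `∇̂ₐ∇̂_b∇̂_cσ + 4Q̂ₐ_b∇̂_cσ + 2(∇̂ₐQ̂_{bc})σ`
equals the symmetrized third partial derivative `∂₍ₐ∂_b∂_c₎σ`. -/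
theorem spin_three_bgg_projectively_invariant (n : ℕ) (hn : 1 ≤ n)
    (Υ : Fin n → (Fin n → ℝ) → ℝ) (σ : (Fin n → ℝ) → ℝ)
    (hΥ : ∀ a, ContDiff ℝ (⊤ : ℕ∞) (Υ a)) (hσ : ContDiff ℝ (⊤ : ℕ∞) σ) :
    ∀ (a b c : Fin n) (x : Fin n → ℝ),
      (1 / 6 : ℝ) *
          (spin3Expr Υ σ a b c x + spin3Expr Υ σ a c b x + spin3Expr Υ σ b a c x
            + spin3Expr Υ σ b c a x + spin3Expr Υ σ c a b x + spin3Expr Υ σ c b a x)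
        = (1 / 6 : ℝ) *
          (pd a (pd b (pd c σ)) x + pd a (pd c (pd b σ)) x + pd b (pd a (pd c σ)) x
            + pd b (pd c (pd a σ)) x + pd c (pd a (pd b σ)) x + pd c (pd b (pd a σ)) x) := by
  intro a b c x
  simp only [spin3Expr, D3, DQhat]
  simp only [Spin3Aux.pd_D2 hΥ hσ]
  simp only [D2, Spin3Aux.pd_D1 hΥ hσ, Spin3Aux.pd_Qhat hΥ]
  simp only [D1, Qhat]
  ring
end
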